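/- Let L be the Laplacian matrix of a connected weighted graph on a finite vertex set V, let Q be a nonempty proper subset of V, and let A = L_Q be the grounded Laplacian (the principal submatrix of L with rows and columns in Q deleted). Then for every diagonal matrix M indexed by V \ Q with nonnegative diagonal entries, every vertex u ∈ V \ Q, and every real number w > 0: trace(A^{-1}) - trace((A + w·e_u e_uᵀ)^{-1}) ≥ trace((A + M)^{-1}) - trace((A + M + w·e_u e_uᵀ)^{-1}), where e_u is the standard basis vector of index u. (This expresses that the effective resistance R_Q(S) = trace(L(S)_Q^{-1}) is a supermodular function of the set S of added edges incident to Q: for S ⊆ T ⊆ E_Q and e ∉ T, R_Q(S) - R_Q(S∪{e}) ≥ R_Q(T) - R_Q(T∪{e}).) -/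

import Mathlib

/-!
The grounded Laplacian `A = L_Q` of a connected graph is a positive definite Z-matrix, and so is
`A + D` for every nonnegative diagonal `D`. Such matrices are inverse-positive: `(A + D)⁻¹ ≥ 0`
entrywise, and `(A + D)⁻¹` decreases entrywise in `D` by the resolvent identity
`A⁻¹ - (A + D)⁻¹ = A⁻¹ D (A + D)⁻¹`. With `E = w e_u e_uᵀ`, the same identity writes the marginal
gain `tr A⁻¹ - tr (A + E)⁻¹` as `tr (A⁻¹ E (A + E)⁻¹)`, a sum of products of nonnegative entries of
`A⁻¹` and `(A + E)⁻¹`; replacing `A` by `A + M` decreases every factor, so the gain can only shrink.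
-/

open Matrix

/-- The simple graph whose adjacency relation is `i ≠ j ∧ W i j > 0`. -/
def weightedAdjGraph {V : Type*} (W : V → V → ℝ) (hsymm : ∀ i j, W i j = W j i) :
    SimpleGraph V where
  Adj i j := i ≠ j ∧ 0 < W i j
  symm := by
    refine ⟨?_⟩
    intro i j h
    exact ⟨h.1.symm, by rw [← hsymm i j]; exact h.2⟩
  loopless := by refine ⟨?_⟩; intro i h; exact h.1 rfl

/-- The Laplacian matrix of a weighted graph: `L i i = ∑ j, W i j` and
`L i j = -W i j` for `i ≠ j`. -/
def laplacian {V : Type*} [Fintype V] [DecidableEq V] (W : V → V → ℝ) : Matrix V V ℝ :=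
  Matrix.of fun i j => if i = j then ∑ k, W i k else -W i j

/-- The grounded Laplacian `L_Q`: the principal submatrix of `L` indexed by `V \ Q`. -/
def grounded {V : Type*} (L : Matrix V V ℝ) (Q : Finset V) :
    Matrix {i // i ∉ Q} {i // i ∉ Q} ℝ :=
  L.submatrix Subtype.val Subtype.val

namespace Matrix

variable {n K : Type*}

theorem trace_inv_sub_trace_inv_add [Fintype n] [DecidableEq n] [CommRing K]
    {A B : Matrix n n K} (h : IsUnit A ↔ IsUnit (A + B)) :
    A⁻¹.trace - (A + B)⁻¹.trace = (A⁻¹ * B * (A + B)⁻¹).trace := by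
  rw [← trace_sub, inv_sub_inv h, add_sub_cancel_left]

theorem trace_mul_diagonal_mul_le [Fintype n] [DecidableEq n] [Semiring K] [PartialOrder K]
    [IsOrderedRing K] {P P' R R' : Matrix n n K} {e : n → K}
    (hP : ∀ i j, 0 ≤ P i j) (hPP' : ∀ i j, P i j ≤ P' i j)
    (hR : ∀ i j, 0 ≤ R i j) (hRR' : ∀ i j, R i j ≤ R' i j) (he : 0 ≤ e) :
    (P * diagonal e * R).trace ≤ (P' * diagonal e * R').trace := by
  have htrace (S T : Matrix n n K) :
      (S * diagonal e * T).trace = ∑ i, ∑ k, S i k * e k * T k i :=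
    Finset.sum_congr rfl fun i _ => by rw [diag_apply, mul_apply]; simp only [mul_diagonal]
  rw [htrace, htrace]
  gcongr with i _ k _
  exacts [hR k i, mul_nonneg ((hP i k).trans (hPP' i k)) (he k), he k, hPP' i k, hRR' k i]

def IsZMatrix [Zero K] [LE K] (A : Matrix n n K) : Prop :=
  ∀ i j, i ≠ j → A i j ≤ 0

theorem IsZMatrix.add_diagonal [DecidableEq n] [AddZeroClass K] [LE K] {A : Matrix n n K}
    (hZ : A.IsZMatrix) (d : n → K) : (A + diagonal d).IsZMatrix :=
  fun i j hij => by simpa [diagonal_apply_ne _ hij] using hZ i j hij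

variable [Fintype n] [Field K] [LinearOrder K] [IsStrictOrderedRing K] [StarRing K]
  [StarOrderedRing K] [TrivialStar K] {A : Matrix n n K}

theorem IsZMatrix.nonneg_of_mulVec_nonneg (hZ : A.IsZMatrix) (hA : A.PosDef) {x : n → K}
    (hx : 0 ≤ A *ᵥ x) : 0 ≤ x := by
  set y := x ⊓ 0
  have hy : y ≤ 0 := inf_le_right
  -- `y` and `x - y` have disjoint supports, so only off-diagonal entries of `A` contribute
  have hcross : 0 ≤ y ⬝ᵥ (A *ᵥ (x - y)) := by
    rw [dot_mulVec_eq_sum_sum]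
    refine Finset.sum_nonneg fun j _ => Finset.sum_nonneg fun i _ => ?_
    obtain rfl | hij := eq_or_ne i j
    · rcases le_total (x i) 0 with hxi | hxi <;> simp [y, hxi]
    · exact mul_nonneg (mul_nonneg_of_nonpos_of_nonpos (hy i) (hZ i j hij))
        (sub_nonneg.2 inf_le_left)
  have hxy : y ⬝ᵥ (A *ᵥ x) ≤ 0 :=
    Finset.sum_nonpos fun i _ => mul_nonpos_of_nonpos_of_nonneg (hy i) (hx i)
  have hy0 : y = 0 := by
    by_contra hy0
    have hpos := hA.dotProduct_mulVec_pos hy0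
    rw [star_trivial] at hpos
    rw [← add_sub_cancel y x, mulVec_add, dotProduct_add] at hxy
    linarith
  exact inf_eq_right.1 hy0

variable [DecidableEq n]

theorem IsZMatrix.inv_nonneg (hZ : A.IsZMatrix) (hA : A.PosDef) (i j : n) : 0 ≤ A⁻¹ i j := by
  have hcol : A *ᵥ A⁻¹.col j = Pi.single j 1 := by
    rw [← mulVec_single_one, mulVec_mulVec,
      mul_nonsing_inv _ ((isUnit_iff_isUnit_det A).1 hA.isUnit), one_mulVec]
  exact hZ.nonneg_of_mulVec_nonneg hA (hcol ▸ Pi.single_nonneg.2 zero_le_one) i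

theorem IsZMatrix.inv_add_diagonal_le (hZ : A.IsZMatrix) (hA : A.PosDef) {d : n → K}
    (hd : 0 ≤ d) (i j : n) : (A + diagonal d)⁻¹ i j ≤ A⁻¹ i j := by
  have hAd : (A + diagonal d).PosDef := hA.add_posSemidef (.diagonal hd)
  have hsub : A⁻¹ - (A + diagonal d)⁻¹ = A⁻¹ * diagonal d * (A + diagonal d)⁻¹ := by
    rw [inv_sub_inv (iff_of_true hA.isUnit hAd.isUnit), add_sub_cancel_left]
  have hprod : 0 ≤ (A⁻¹ * diagonal d * (A + diagonal d)⁻¹) i j := by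
    rw [mul_apply]
    refine Finset.sum_nonneg fun k _ => ?_
    rw [mul_diagonal]
    exact mul_nonneg (mul_nonneg (hZ.inv_nonneg hA i k) (hd k))
      ((hZ.add_diagonal d).inv_nonneg hAd k j)
  rwa [← hsub, sub_apply, sub_nonneg] at hprod

theorem IsZMatrix.trace_inv_add_diagonal_supermodular (hZ : A.IsZMatrix) (hA : A.PosDef)
    {d e : n → K} (hd : 0 ≤ d) (he : 0 ≤ e) :
    (A + diagonal d)⁻¹.trace - (A + diagonal d + diagonal e)⁻¹.trace ≤
      A⁻¹.trace - (A + diagonal e)⁻¹.trace := by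
  have hAd : (A + diagonal d).PosDef := hA.add_posSemidef (.diagonal hd)
  have hAe : (A + diagonal e).PosDef := hA.add_posSemidef (.diagonal he)
  have hAed : (A + diagonal e + diagonal d).PosDef := hAe.add_posSemidef (.diagonal hd)
  rw [trace_inv_sub_trace_inv_add (iff_of_true hA.isUnit hAe.isUnit),
    trace_inv_sub_trace_inv_add
      (iff_of_true hAd.isUnit (add_right_comm A _ _ ▸ hAed).isUnit), add_right_comm]
  exact trace_mul_diagonal_mul_le ((hZ.add_diagonal d).inv_nonneg hAd)
    (hZ.inv_add_diagonal_le hA hd) (((hZ.add_diagonal e).add_diagonal d).inv_nonneg hAed)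
    ((hZ.add_diagonal e).inv_add_diagonal_le hAe hd) he

end Matrix

section Laplacian

variable {V : Type*} [Fintype V] [DecidableEq V] {W : V → V → ℝ}

theorem laplacian_eq_diagonal_sub (hdiag : ∀ i, W i i = 0) :
    laplacian W = diagonal (fun i => ∑ k, W i k) - of W := by
  ext i j
  obtain rfl | hij := eq_or_ne i j <;> simp [laplacian, *]

theorem dotProduct_laplacian_mulVec (hsymm : ∀ i j, W i j = W j i) (hdiag : ∀ i, W i i = 0)
    (x : V → ℝ) : x ⬝ᵥ (laplacian W *ᵥ x) = (∑ i, ∑ j, W i j * (x i - x j) ^ 2) / 2 := by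
  have hswap : ∑ i, ∑ j, W i j * x j ^ 2 = ∑ i, ∑ j, W i j * x i ^ 2 := by
    rw [Finset.sum_comm]
    simp_rw [hsymm _ _]
  have hexpand : ∑ i, ∑ j, W i j * (x i - x j) ^ 2 =
      ∑ i, ∑ j, W i j * x i ^ 2 + ∑ i, ∑ j, W i j * x j ^ 2 -
        2 * ∑ i, ∑ j, x i * W i j * x j := by
    simp only [Finset.mul_sum, ← Finset.sum_add_distrib, ← Finset.sum_sub_distrib]
    congr! 2
    ring
  have hdeg : x ⬝ᵥ (diagonal (fun i => ∑ k, W i k) *ᵥ x) = ∑ i, ∑ j, W i j * x i ^ 2 := by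
    simp only [dotProduct, mulVec_diagonal, Finset.sum_mul, Finset.mul_sum]
    congr! 2
    ring
  have hadj : x ⬝ᵥ (of W *ᵥ x) = ∑ i, ∑ j, x i * W i j * x j := by
    simp only [dotProduct, mulVec, of_apply, Finset.mul_sum, mul_assoc]
  rw [hexpand, hswap, laplacian_eq_diagonal_sub hdiag, sub_mulVec, dotProduct_sub, hdeg, hadj]
  ring

theorem eq_of_reachable_of_dotProduct_laplacian_mulVec_eq_zero (hsymm : ∀ i j, W i j = W j i)
    (hdiag : ∀ i, W i i = 0) (hnonneg : ∀ i j, 0 ≤ W i j) {x : V → ℝ}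
    (hx : x ⬝ᵥ (laplacian W *ᵥ x) = 0) {i j : V}
    (hij : (weightedAdjGraph W hsymm).Reachable i j) : x i = x j := by
  have hterm (i j : V) : 0 ≤ W i j * (x i - x j) ^ 2 := mul_nonneg (hnonneg i j) (sq_nonneg _)
  have hsum : ∑ i, ∑ j, W i j * (x i - x j) ^ 2 = 0 := by
    rw [dotProduct_laplacian_mulVec hsymm hdiag] at hx
    linarith
  have hadj (i j : V) (h : (weightedAdjGraph W hsymm).Adj i j) : x i = x j := by
    have hij : W i j * (x i - x j) ^ 2 = 0 :=
      (Finset.sum_eq_zero_iff_of_nonneg fun j _ => hterm i j).1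
        ((Finset.sum_eq_zero_iff_of_nonneg fun i _ => Finset.sum_nonneg fun j _ => hterm i j).1
          hsum i (Finset.mem_univ i)) j (Finset.mem_univ j)
    rw [mul_eq_zero, pow_eq_zero_iff two_ne_zero, sub_eq_zero] at hij
    exact hij.resolve_left h.2.ne'
  obtain ⟨p⟩ := hij
  induction p with
  | nil => rfl
  | cons h _ ih => exact (hadj _ _ h).trans ih

theorem dotProduct_grounded_mulVec (L : Matrix V V ℝ) (Q : Finset V) (x : {i // i ∉ Q} → ℝ) :
    x ⬝ᵥ (grounded L Q *ᵥ x) =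
      Subtype.val.extend x 0 ⬝ᵥ (L *ᵥ Subtype.val.extend x 0) := by
  set y : V → ℝ := Subtype.val.extend x 0
  have hy (i : {i // i ∉ Q}) : y i = x i := Subtype.val_injective.extend_apply _ _ _
  have hyQ (v : V) (hv : v ∈ Q) : y v = 0 := Function.extend_val_apply' (not_not.2 hv)
  have hsum (g : V → ℝ) (hg : ∀ v ∈ Q, g v = 0) : ∑ v, g v = ∑ i : {i // i ∉ Q}, g i := by
    rw [← Fintype.sum_subtype_add_sum_subtype (· ∈ Q) g]
    simp +contextual [hg]
  rw [dot_mulVec_eq_sum_sum, dot_mulVec_eq_sum_sum, hsum _ fun v hv => by simp [hyQ v hv]]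
  refine Fintype.sum_congr _ _ fun j => ?_
  rw [hsum _ fun v hv => by simp [hyQ v hv]]
  simp [grounded, hy]

theorem posDef_grounded_laplacian (hsymm : ∀ i j, W i j = W j i) (hdiag : ∀ i, W i i = 0)
    (hnonneg : ∀ i j, 0 ≤ W i j) (hconn : (weightedAdjGraph W hsymm).Connected)
    {Q : Finset V} (hQ : Q.Nonempty) : (grounded (laplacian W) Q).PosDef := by
  have hherm : (laplacian W).IsHermitian := by
    ext i j
    obtain rfl | hij := eq_or_ne i j
    · simp [laplacian]
    · simp [laplacian, hij, hij.symm, hsymm i j]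
  refine posDef_iff_dotProduct_mulVec.2 ⟨hherm.submatrix _, fun x hx => ?_⟩
  rw [star_trivial, dotProduct_grounded_mulVec]
  set y : V → ℝ := Subtype.val.extend x 0
  have hnn : 0 ≤ y ⬝ᵥ (laplacian W *ᵥ y) := by
    rw [dotProduct_laplacian_mulVec hsymm hdiag]
    exact div_nonneg (Finset.sum_nonneg fun i _ => Finset.sum_nonneg fun j _ =>
      mul_nonneg (hnonneg i j) (sq_nonneg _)) zero_le_two
  -- a null vector of the form is constant on the connected graph, and `y` vanishes on `Q`
  refine hnn.lt_of_ne fun h0 => hx (funext fun i => ?_)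
  obtain ⟨q, hq⟩ := hQ
  have hiq := eq_of_reachable_of_dotProduct_laplacian_mulVec_eq_zero hsymm hdiag hnonneg h0.symm
    (hconn.preconnected i q)
  rwa [show y i = x i from Subtype.val_injective.extend_apply _ _ _,
    show y q = 0 from Function.extend_val_apply' (not_not.2 hq)] at hiq

theorem isZMatrix_grounded_laplacian (hnonneg : ∀ i j, 0 ≤ W i j) (Q : Finset V) :
    (grounded (laplacian W) Q).IsZMatrix :=
  fun i j hij => by simp [grounded, laplacian, Subtype.val_injective.ne hij, hnonneg]

end Laplacian

theorem grounded_laplacian_trace_inv_supermodular_general {V : Type*} [Fintype V] [DecidableEq V]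
    (W : V → V → ℝ) (hsymm : ∀ i j, W i j = W j i)
    (hdiag : ∀ i, W i i = 0) (hnonneg : ∀ i j, 0 ≤ W i j)
    (hconn : (weightedAdjGraph W hsymm).Connected)
    (Q : Finset V) (hQ : Q.Nonempty)
    (M : {i // i ∉ Q} → ℝ) (hM : ∀ i, 0 ≤ M i)
    (u : {i // i ∉ Q}) (w : ℝ) (hw : 0 < w) :
    ((grounded (laplacian W) Q + Matrix.diagonal M)⁻¹).trace -
        ((grounded (laplacian W) Q + Matrix.diagonal M + Matrix.single u u w)⁻¹).trace ≤
      ((grounded (laplacian W) Q)⁻¹).trace -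
        ((grounded (laplacian W) Q + Matrix.single u u w)⁻¹).trace := by
  rw [← diagonal_single]
  exact (isZMatrix_grounded_laplacian hnonneg Q).trace_inv_add_diagonal_supermodular
    (posDef_grounded_laplacian hsymm hdiag hnonneg hconn hQ) hM (Pi.single_nonneg.2 hw.le)

/-- Supermodularity of the effective resistance: for the grounded Laplacian `A = L_Q` of a
connected weighted graph, any nonnegative diagonal matrix `M`, any vertex `u ∈ V \ Q`
and any weight `w > 0`,
`trace(A⁻¹) - trace((A + w·e_u e_uᵀ)⁻¹) ≥ trace((A+M)⁻¹) - trace((A+M+w·e_u e_uᵀ)⁻¹)`. -/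
theorem grounded_laplacian_trace_inv_supermodular {V : Type*} [Fintype V] [DecidableEq V]
    (W : V → V → ℝ) (hsymm : ∀ i j, W i j = W j i)
    (hdiag : ∀ i, W i i = 0) (hnonneg : ∀ i j, 0 ≤ W i j)
    (hconn : (weightedAdjGraph W hsymm).Connected)
    (Q : Finset V) (hQ : Q.Nonempty) (hQproper : Q ≠ Finset.univ)
    (M : {i // i ∉ Q} → ℝ) (hM : ∀ i, 0 ≤ M i)
    (u : {i // i ∉ Q}) (w : ℝ) (hw : 0 < w) :
    ((grounded (laplacian W) Q + Matrix.diagonal M)⁻¹).trace -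
        ((grounded (laplacian W) Q + Matrix.diagonal M + Matrix.single u u w)⁻¹).trace ≤
      ((grounded (laplacian W) Q)⁻¹).trace -
        ((grounded (laplacian W) Q + Matrix.single u u w)⁻¹).trace :=
  grounded_laplacian_trace_inv_supermodular_general W hsymm hdiag hnonneg hconn Q hQ M hM u w hw
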